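/- Let G be a simple graph of Class 2 with a critical edge e1 = x y1, let φ ∈ C^Δ(G − e1), and let F = (x, e1, y1, …, e_p, y_p) be a multi-fan at x with respect to e1 and φ. Then the vertex set V(F) = {x, y1, …, y_p} is φ-elementary. -/

import Mathlib

/-!
Vizing's fan argument. If `x` and `y n` miss a common colour `α`, recolour `x (y n)` by `α`: its
old colour is missing at an earlier `y j` and now also at `x`, and the multi-fan up to `y j`
survives; descending this way, at `y 0` one would obtain a `Δ`-colouring of `G`.
If `y t` and `y n` (`t < n`, `n` minimal) miss a common colour `α`, pick `β` missing at `x`.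
The `α/β` subgraph has maximum degree two and `x`, `y t`, `y n` have degree at most one in it,
so they cannot all lie on one Kempe chain. Swapping `α` and `β` on the chain at `y t` or `y n`
that avoids `x` keeps the multi-fan (up to that vertex) and makes `β` missing at both `x` and that
vertex, which the first part excludes.
-/

/-- A proper `k`-edge-coloring of `G` with colors from `{1, …, k}`: every edge of `G`
receives a color in `{1, …, k}` and distinct edges sharing a vertex get distinct colors. -/
def IsProperEdgeColoring {V : Type*} (G : SimpleGraph V) (k : ℕ) (φ : Sym2 V → ℕ) : Prop :=
  (∀ e ∈ G.edgeSet, φ e ∈ Finset.Icc 1 k) ∧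
    ∀ e₁ ∈ G.edgeSet, ∀ e₂ ∈ G.edgeSet, e₁ ≠ e₂ → (∃ v, v ∈ e₁ ∧ v ∈ e₂) → φ e₁ ≠ φ e₂

/-- The chromatic index `χ'(G)`: the least `k` such that `G` has a proper `k`-edge-coloring. -/
noncomputable def chromIndex {V : Type*} (G : SimpleGraph V) : ℕ :=
  sInf {k | ∃ φ : Sym2 V → ℕ, IsProperEdgeColoring G k φ}

/-- The set `φ̄(u)` of colors of `{1, …, k}` missing at `u`, i.e. not used by `φ` on
any edge of `G` incident with `u`. -/
def missing {V : Type*} (G : SimpleGraph V) (k : ℕ) (φ : Sym2 V → ℕ) (u : V) : Set ℕ :=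
  {c | c ∈ Finset.Icc 1 k ∧ ∀ v, G.Adj u v → φ s(u, v) ≠ c}

open SimpleGraph Function

section

variable {V : Type*}

section Recoloring

variable {H K : SimpleGraph V} {k : ℕ} {φ : Sym2 V → ℕ}

theorem IsProperEdgeColoring.mono (hφ : IsProperEdgeColoring K k φ) (hle : H ≤ K) :
    IsProperEdgeColoring H k φ :=
  ⟨fun e he => hφ.1 e (edgeSet_mono hle he),
    fun e₁ he₁ e₂ he₂ => hφ.2 e₁ (edgeSet_mono hle he₁) e₂ (edgeSet_mono hle he₂)⟩

theorem missing_anti (hle : H ≤ K) (u : V) : missing K k φ u ⊆ missing H k φ u :=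
  fun _ hc => ⟨hc.1, fun v huv => hc.2 v (hle huv)⟩

theorem IsProperEdgeColoring.apply_injOn_neighborSet (hφ : IsProperEdgeColoring H k φ) (u : V) :
    Set.InjOn (fun v => φ s(u, v)) (H.neighborSet u) := by
  intro v hv w hw hvw
  by_contra hne
  exact hφ.2 _ hv _ hw (fun h => hne (Sym2.congr_right.mp h))
    ⟨u, Sym2.mem_mk_left _ _, Sym2.mem_mk_left _ _⟩ hvw

theorem IsProperEdgeColoring.ne_of_adj (hφ : IsProperEdgeColoring H k φ) {u v w : V}
    (hv : H.Adj u v) (hw : H.Adj u w) (hvw : v ≠ w) : φ s(u, v) ≠ φ s(u, w) :=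
  fun h => hvw (hφ.apply_injOn_neighborSet u hv hw h)

theorem missing_update_of_notMem [DecidableEq V] {e : Sym2 V} {u : V} (hu : u ∉ e) (c : ℕ) :
    missing H k (update φ e c) u = missing H k φ u := by
  have hne : ∀ v, s(u, v) ≠ e := fun v h => hu (h ▸ Sym2.mem_mk_left u v)
  ext d
  simp only [missing, Set.mem_ofPred_eq, update_of_ne (hne _)]

theorem apply_mem_missing_update [DecidableEq V] (hφ : IsProperEdgeColoring H k φ) {u v : V}
    (huv : H.Adj u v) {α : ℕ} (hα : φ s(u, v) ≠ α) :
    φ s(u, v) ∈ missing H k (update φ s(u, v) α) u := by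
  refine ⟨hφ.1 _ huv, fun w huw => ?_⟩
  rcases eq_or_ne w v with rfl | hwv
  · simpa using hα.symm
  · rw [update_of_ne (fun h => hwv (Sym2.congr_right.mp h))]
    exact hφ.ne_of_adj huw huv hwv

theorem IsProperEdgeColoring.update [DecidableEq V] {u v : V} {α : ℕ}
    (hφ : IsProperEdgeColoring (K.deleteEdges {s(u, v)}) k φ) (huv : K.Adj u v)
    (hαu : α ∈ missing (K.deleteEdges {s(u, v)}) k φ u)
    (hαv : α ∈ missing (K.deleteEdges {s(u, v)}) k φ v) :
    IsProperEdgeColoring K k (update φ s(u, v) α) := by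
  have hdel : ∀ f ∈ K.edgeSet, f ≠ s(u, v) → f ∈ (K.deleteEdges {s(u, v)}).edgeSet :=
    fun f hf hne => by simpa [edgeSet_deleteEdges] using ⟨hf, hne⟩
  have hnew : ∀ f ∈ K.edgeSet, f ≠ s(u, v) → ∀ w ∈ s(u, v), w ∈ f → α ≠ φ f := by
    intro f hf hne w hw hwf
    obtain ⟨z, rfl⟩ := Sym2.mem_iff_exists.mp hwf
    rcases Sym2.mem_iff.mp hw with rfl | rfl
    exacts [(hαu.2 z (hdel _ hf hne)).symm, (hαv.2 z (hdel _ hf hne)).symm]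
  refine ⟨fun f hf => ?_, fun f₁ hf₁ f₂ hf₂ hne ⟨w, hw₁, hw₂⟩ => ?_⟩
  · rcases eq_or_ne f s(u, v) with rfl | hf'
    · simpa using hαu.1
    · simpa [update_of_ne hf'] using hφ.1 f (hdel f hf hf')
  · rcases eq_or_ne f₁ s(u, v) with rfl | h₁ <;> rcases eq_or_ne f₂ s(u, v) with rfl | h₂
    · exact absurd rfl hne
    · simpa [update_of_ne h₂] using hnew f₂ hf₂ h₂ w hw₁ hw₂
    · simpa [update_of_ne h₁] using (hnew f₁ hf₁ h₁ w hw₂ hw₁).symm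
    · simpa [update_of_ne h₁, update_of_ne h₂] using
        hφ.2 f₁ (hdel f₁ hf₁ h₁) f₂ (hdel f₂ hf₂ h₂) hne ⟨w, hw₁, hw₂⟩

theorem missing_nonempty_of_neighborSet_subset {u : V} (s : Finset V)
    (hs : H.neighborSet u ⊆ s) (hcard : s.card < k) : (missing H k φ u).Nonempty := by
  classical
  obtain ⟨c, hc, hcs⟩ : ∃ c ∈ Finset.Icc 1 k, c ∉ s.image (fun v => φ s(u, v)) :=
    Finset.exists_mem_notMem_of_card_lt_card <| by
      simpa using Finset.card_image_le.trans_lt hcard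
  exact ⟨c, hc, fun v huv h => hcs (Finset.mem_image.mpr ⟨v, hs huv, h⟩)⟩

theorem missing_deleteEdges_nonempty {G : SimpleGraph V} {x y : V} [Fintype (G.neighborSet x)]
    (hxy : G.Adj x y) (hk : G.degree x ≤ k) :
    (missing (G.deleteEdges {s(x, y)}) k φ x).Nonempty := by
  classical
  refine missing_nonempty_of_neighborSet_subset ((G.neighborFinset x).erase y) ?_ ?_
  · intro v hv
    rw [mem_neighborSet, deleteEdges_adj] at hv
    simpa [hv.1] using fun h : v = y => hv.2 (by simp [h])
  · have : 0 < G.degree x := G.degree_pos_iff_exists_adj x |>.mpr ⟨y, hxy⟩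
    rw [Finset.card_erase_of_mem (by simpa using hxy), card_neighborFinset_eq_degree]
    omega

end Recoloring

def kempeGraph (H : SimpleGraph V) (φ : Sym2 V → ℕ) (α β : ℕ) : SimpleGraph V where
  Adj u v := H.Adj u v ∧ (φ s(u, v) = α ∨ φ s(u, v) = β)
  symm := ⟨fun _ _ h => ⟨h.1.symm, by rw [Sym2.eq_swap]; exact h.2⟩⟩
  loopless := ⟨fun _ h => H.irrefl h.1⟩

theorem kempeGraph_adj {H : SimpleGraph V} {φ : Sym2 V → ℕ} {α β : ℕ} {u v : V} :
    (kempeGraph H φ α β).Adj u v ↔ H.Adj u v ∧ (φ s(u, v) = α ∨ φ s(u, v) = β) :=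
  Iff.rfl

open Classical in
noncomputable def kempeSwap (H : SimpleGraph V) (φ : Sym2 V → ℕ) (α β : ℕ) (v : V) :
    Sym2 V → ℕ :=
  fun f => if f ∈ {u | (kempeGraph H φ α β).Reachable v u}.sym2 then Equiv.swap α β (φ f) else φ f

section Kempe

variable {H : SimpleGraph V} {k : ℕ} {φ : Sym2 V → ℕ} {α β : ℕ}

theorem IsProperEdgeColoring.encard_neighborSet_kempeGraph_le_two
    (hφ : IsProperEdgeColoring H k φ) (u : V) :
    ((kempeGraph H φ α β).neighborSet u).encard ≤ 2 := by
  have hmaps : Set.MapsTo (fun v => φ s(u, v)) ((kempeGraph H φ α β).neighborSet u) {α, β} :=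
    fun v hv => (kempeGraph_adj.mp hv).2
  calc _ ≤ ({α, β} : Set ℕ).encard := Set.encard_le_encard_of_injOn hmaps
          ((hφ.apply_injOn_neighborSet u).mono fun v hv => (kempeGraph_adj.mp hv).1)
    _ ≤ 2 := (Set.encard_insert_le _ _).trans (by simp; norm_num)

theorem IsProperEdgeColoring.subsingleton_neighborSet_kempeGraph
    (hφ : IsProperEdgeColoring H k φ) {u : V}
    (hu : α ∈ missing H k φ u ∨ β ∈ missing H k φ u) :
    ((kempeGraph H φ α β).neighborSet u).Subsingleton := by
  intro v hv' w hw'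
  obtain ⟨hv, hcv⟩ := kempeGraph_adj.mp hv'
  obtain ⟨hw, hcw⟩ := kempeGraph_adj.mp hw'
  refine hφ.apply_injOn_neighborSet u hv hw ?_
  rcases hu with hu | hu <;> have := hu.2 v hv <;> have := hu.2 w hw <;> grind

variable {v : V}

theorem kempeSwap_apply_of_not_reachable {u : V} (hu : ¬ (kempeGraph H φ α β).Reachable v u)
    {f : Sym2 V} (huf : u ∈ f) : kempeSwap H φ α β v f = φ f := by
  obtain ⟨w, rfl⟩ := Sym2.mem_iff_exists.mp huf
  exact if_neg fun h => hu h.1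

theorem kempeSwap_apply_of_reachable {u w : V} (hu : (kempeGraph H φ α β).Reachable v u)
    (huw : H.Adj u w) : kempeSwap H φ α β v s(u, w) = Equiv.swap α β (φ s(u, w)) := by
  by_cases hc : φ s(u, w) = α ∨ φ s(u, w) = β
  · exact if_pos ⟨hu, hu.trans (Adj.reachable (kempeGraph_adj.mpr ⟨huw, hc⟩))⟩
  · push Not at hc
    rw [Equiv.swap_apply_of_ne_of_ne hc.1 hc.2]
    unfold kempeSwap
    split_ifs <;> simp [Equiv.swap_apply_of_ne_of_ne hc.1 hc.2]

theorem kempeSwap_eq_iff_of_ne {c : ℕ} (hα : c ≠ α) (hβ : c ≠ β) (f : Sym2 V) :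
    kempeSwap H φ α β v f = c ↔ φ f = c := by
  unfold kempeSwap
  split_ifs
  · rw [Equiv.swap_apply_eq_iff, Equiv.swap_apply_of_ne_of_ne hα hβ]
  · rfl

theorem IsProperEdgeColoring.kempeSwap (hφ : IsProperEdgeColoring H k φ)
    (hα : α ∈ Finset.Icc 1 k) (hβ : β ∈ Finset.Icc 1 k) :
    IsProperEdgeColoring H k (kempeSwap H φ α β v) := by
  refine ⟨fun f hf => ?_, fun f₁ hf₁ f₂ hf₂ hne ⟨u, hu₁, hu₂⟩ => ?_⟩
  · unfold _root_.kempeSwap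
    split_ifs
    · rcases eq_or_ne (φ f) α with h | h
      · simpa [h] using hβ
      rcases eq_or_ne (φ f) β with h' | h'
      · simpa [h'] using hα
      simpa [Equiv.swap_apply_of_ne_of_ne h h'] using hφ.1 f hf
    · exact hφ.1 f hf
  obtain ⟨w₁, rfl⟩ := Sym2.mem_iff_exists.mp hu₁
  obtain ⟨w₂, rfl⟩ := Sym2.mem_iff_exists.mp hu₂
  have hw : w₁ ≠ w₂ := fun h => hne (h ▸ rfl)
  by_cases hu : (kempeGraph H φ α β).Reachable v u
  · rw [kempeSwap_apply_of_reachable hu hf₁, kempeSwap_apply_of_reachable hu hf₂,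
      (Equiv.injective _).ne_iff]
    exact hφ.ne_of_adj hf₁ hf₂ hw
  · rw [kempeSwap_apply_of_not_reachable hu hu₁, kempeSwap_apply_of_not_reachable hu hu₂]
    exact hφ.ne_of_adj hf₁ hf₂ hw

theorem missing_kempeSwap_of_not_reachable {u : V}
    (hu : ¬ (kempeGraph H φ α β).Reachable v u) :
    missing H k (kempeSwap H φ α β v) u = missing H k φ u := by
  ext c
  simp only [missing, Set.mem_ofPred_eq,
    kempeSwap_apply_of_not_reachable hu (Sym2.mem_mk_left _ _)]

theorem mem_missing_kempeSwap_iff_of_ne {c : ℕ} (hα : c ≠ α) (hβ : c ≠ β) (u : V) :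
    c ∈ missing H k (kempeSwap H φ α β v) u ↔ c ∈ missing H k φ u := by
  simp only [missing, Set.mem_ofPred_eq, ne_eq, kempeSwap_eq_iff_of_ne hα hβ]

theorem mem_missing_kempeSwap_of_reachable {u : V} (hu : (kempeGraph H φ α β).Reachable v u)
    (hβ : β ∈ Finset.Icc 1 k) (hαu : α ∈ missing H k φ u) :
    β ∈ missing H k (kempeSwap H φ α β v) u := by
  refine ⟨hβ, fun w huw => ?_⟩
  rw [kempeSwap_apply_of_reachable hu huw, Ne, Equiv.swap_apply_eq_iff, Equiv.swap_apply_right]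
  exact hαu.2 w huw

end Kempe

section DegreeTwo

variable {H : SimpleGraph V}

theorem SimpleGraph.Walk.IsPath.exists_adj_ne_of_mem_support {a b v : V} {P : H.Walk a b}
    (hP : P.IsPath) (hv : v ∈ P.support) (hva : v ≠ a) (hvb : v ≠ b) :
    ∃ u₁ ∈ P.support, ∃ u₂ ∈ P.support, u₁ ≠ u₂ ∧ H.Adj v u₁ ∧ H.Adj v u₂ := by
  obtain ⟨i, rfl, hi⟩ := Walk.mem_support_iff_exists_getVert.mp hv
  have hi0 : i ≠ 0 := fun h => hva (by simp [h])
  have hin : i ≠ P.length := fun h => hvb (by simp [h])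
  have hpred : H.Adj (P.getVert (i - 1)) (P.getVert i) := by
    simpa [Nat.sub_add_cancel (Nat.pos_of_ne_zero hi0)] using
      P.adj_getVert_succ (i := i - 1) (by omega)
  refine ⟨_, P.getVert_mem_support (i - 1), _, P.getVert_mem_support (i + 1), fun h => ?_,
    hpred.symm, P.adj_getVert_succ (by omega)⟩
  have := hP.getVert_injOn (by simp; omega) (by simp; omega) h
  omega

theorem SimpleGraph.Walk.IsPath.mem_support_of_adj {a b v w : V} {P : H.Walk a b}
    (hP : P.IsPath) (hab : a ≠ b) (hdeg : ∀ u, (H.neighborSet u).encard ≤ 2)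
    (ha : (H.neighborSet a).Subsingleton) (hb : (H.neighborSet b).Subsingleton)
    (hv : v ∈ P.support) (hvw : H.Adj v w) : w ∈ P.support := by
  have hlen : P.length ≠ 0 := fun h => hab (Walk.eq_of_length_eq_zero h)
  rcases eq_or_ne v a with rfl | hva
  · have h₁ : H.Adj v (P.getVert 1) := by simpa using P.adj_getVert_succ (i := 0) (by omega)
    exact ha hvw h₁ ▸ P.getVert_mem_support 1
  rcases eq_or_ne v b with rfl | hvb
  · have h₁ : H.Adj (P.getVert (P.length - 1)) v := by
      simpa [Nat.sub_add_cancel (Nat.pos_of_ne_zero hlen)] using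
        P.adj_getVert_succ (i := P.length - 1) (by omega)
    exact hb hvw h₁.symm ▸ P.getVert_mem_support _
  obtain ⟨u₁, hu₁, u₂, hu₂, hne, h₁, h₂⟩ := hP.exists_adj_ne_of_mem_support hv hva hvb
  have hpair : ({u₁, u₂} : Set V) = H.neighborSet v :=
    (Set.toFinite _).eq_of_subset_of_encard_le (Set.pair_subset h₁ h₂)
      ((hdeg v).trans (Set.encard_pair hne).ge)
  rcases (hpair.symm ▸ hvw : w ∈ ({u₁, u₂} : Set V)) with rfl | rfl
  exacts [hu₁, hu₂]

/-- A component containing `a` and `b` is a path between them, and `c` would be an interior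
vertex of it. -/
theorem not_reachable_of_subsingleton_neighborSet (hdeg : ∀ u, (H.neighborSet u).encard ≤ 2)
    {a b c : V} (ha : (H.neighborSet a).Subsingleton) (hb : (H.neighborSet b).Subsingleton)
    (hc : (H.neighborSet c).Subsingleton) (hab : a ≠ b) (hca : c ≠ a) (hcb : c ≠ b)
    (hreach : H.Reachable a b) : ¬ H.Reachable a c := by
  obtain ⟨P, hP⟩ := hreach.exists_isPath
  rintro ⟨Q⟩
  have hclosed : ∀ {u w} (Q : H.Walk u w), u ∈ P.support → w ∈ P.support := by
    intro u w Q
    induction Q with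
    | nil => exact id
    | cons h _ ih => exact fun hu => ih (hP.mem_support_of_adj hab hdeg ha hb hu h)
  obtain ⟨u₁, -, u₂, -, hne, h₁, h₂⟩ :=
    hP.exists_adj_ne_of_mem_support (hclosed Q P.start_mem_support) hca hcb
  exact hne (hc h₁ h₂)

end DegreeTwo

theorem not_isProperEdgeColoring_of_lt_chromIndex {G : SimpleGraph V} {k : ℕ}
    (hk : k < chromIndex G) (ψ : Sym2 V → ℕ) : ¬ IsProperEdgeColoring G k ψ :=
  fun hψ => (Nat.sInf_le ⟨ψ, hψ⟩ : chromIndex G ≤ k).not_gt hk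

/-- Condition F2 for the multi-fan `(x, x (y 0), y 0, …, x (y n), y n)`. -/
def IsMultiFanUpTo (H : SimpleGraph V) (k : ℕ) (φ : Sym2 V → ℕ) (x : V) {p : ℕ}
    (y : Fin p → V) (n : Fin p) : Prop :=
  ∀ i ≤ n, 0 < (i : ℕ) → ∃ j < i, φ s(x, y i) ∈ missing H k φ (y j)

section MultiFan

variable {H : SimpleGraph V} {k : ℕ} {φ : Sym2 V → ℕ} {x : V} {p : ℕ} {y : Fin p → V}
  {m n : Fin p}

theorem IsMultiFanUpTo.mono (h : IsMultiFanUpTo H k φ x y n) (hmn : m ≤ n) :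
    IsMultiFanUpTo H k φ x y m :=
  fun i hi => h i (hi.trans hmn)

theorem IsMultiFanUpTo.update_of_lt [DecidableEq V] (h : IsMultiFanUpTo H k φ x y m)
    (hmn : m < n) (hinj : Injective y) (hxy : ∀ i, x ≠ y i) (c : ℕ) :
    IsMultiFanUpTo H k (update φ s(x, y n) c) x y m := by
  intro i hi hi0
  obtain ⟨j, hji, hj⟩ := h i hi hi0
  have hin : i ≠ n := (hi.trans_lt hmn).ne
  have hjn : j ≠ n := (hji.trans_le hi |>.trans hmn).ne
  refine ⟨j, hji, ?_⟩
  rwa [update_of_ne (fun h => hin (hinj (Sym2.congr_right.mp h))),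
    missing_update_of_notMem (by simp [Sym2.mem_iff, (hxy j).symm, hinj.ne hjn])]

theorem IsMultiFanUpTo.kempeSwap (h : IsMultiFanUpTo H k φ x y n) {α β : ℕ} {v : V}
    (hx : ¬ (kempeGraph H φ α β).Reachable v x) (hβ : β ∈ missing H k φ x)
    (hadj : ∀ i : Fin p, 0 < (i : ℕ) → H.Adj x (y i))
    (hα : ∀ j < n, α ∈ missing H k φ (y j) → ¬ (kempeGraph H φ α β).Reachable v (y j)) :
    IsMultiFanUpTo H k (kempeSwap H φ α β v) x y n := by
  intro i hi hi0
  obtain ⟨j, hji, hj⟩ := h i hi hi0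
  refine ⟨j, hji, ?_⟩
  rw [kempeSwap_apply_of_not_reachable hx (Sym2.mem_mk_left _ _)]
  rcases eq_or_ne (φ s(x, y i)) α with hcα | hcα
  · rw [hcα] at hj ⊢
    rwa [missing_kempeSwap_of_not_reachable (hα j (hji.trans_le hi) hj)]
  · rwa [mem_missing_kempeSwap_iff_of_ne hcα (hβ.2 _ (hadj i hi0))]

end MultiFan

section CriticalFan

variable {G : SimpleGraph V} {k : ℕ} {x : V} {p : ℕ} {y : Fin p → V}

theorem adj_deleteEdges_of_pos (hp : 0 < p) (hinj : Injective y) {i : Fin p}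
    (hadj : G.Adj x (y i)) (hi : 0 < (i : ℕ)) : (G.deleteEdges {s(x, y ⟨0, hp⟩)}).Adj x (y i) := by
  refine deleteEdges_adj.mpr ⟨hadj, fun h => ?_⟩
  have : i = ⟨0, hp⟩ := hinj (Sym2.congr_right.mp h)
  simp [this] at hi

theorem disjoint_missing_center_of_isMultiFanUpTo (hG : ∀ ψ, ¬ IsProperEdgeColoring G k ψ)
    (hp : 0 < p) (hinj : Injective y) (hadj : ∀ i, G.Adj x (y i)) (n : Fin p)
    (φ : Sym2 V → ℕ) (hφ : IsProperEdgeColoring (G.deleteEdges {s(x, y ⟨0, hp⟩)}) k φ)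
    (hfan : IsMultiFanUpTo (G.deleteEdges {s(x, y ⟨0, hp⟩)}) k φ x y n) :
    Disjoint (missing (G.deleteEdges {s(x, y ⟨0, hp⟩)}) k φ x)
      (missing (G.deleteEdges {s(x, y ⟨0, hp⟩)}) k φ (y n)) := by
  classical
  induction n using WellFoundedLT.induction generalizing φ with
  | _ n ih =>
  refine Set.disjoint_left.mpr fun α hαx hαn => ?_
  rcases Nat.eq_zero_or_pos n with h0 | hpos
  · obtain rfl : n = ⟨0, hp⟩ := Fin.ext h0
    exact hG _ (hφ.update (hadj _) hαx hαn)
  obtain ⟨j, hjn, hc⟩ := hfan n le_rfl hpos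
  have hxn := adj_deleteEdges_of_pos hp hinj (hadj n) hpos
  have hle := deleteEdges_le (G := G.deleteEdges {s(x, y ⟨0, hp⟩)}) {s(x, y n)}
  have hφ' := (hφ.mono hle).update hxn (missing_anti hle _ hαx) (missing_anti hle _ hαn)
  have hxy : ∀ i, x ≠ y i := fun i => (hadj i).ne
  refine Set.disjoint_left.mp
    (ih j hjn _ hφ' ((hfan.mono hjn.le).update_of_lt hjn hinj hxy α))
    (apply_mem_missing_update hφ hxn (hαx.2 _ hxn)) ?_
  rwa [missing_update_of_notMem (by simp [Sym2.mem_iff, (hxy j).symm, hinj.ne hjn.ne])]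

theorem reachable_kempeGraph_of_isMultiFanUpTo (hG : ∀ ψ, ¬ IsProperEdgeColoring G k ψ)
    (hp : 0 < p) (hinj : Injective y) (hadj : ∀ i, G.Adj x (y i)) {φ : Sym2 V → ℕ}
    (hφ : IsProperEdgeColoring (G.deleteEdges {s(x, y ⟨0, hp⟩)}) k φ) {m : Fin p}
    (hfan : IsMultiFanUpTo (G.deleteEdges {s(x, y ⟨0, hp⟩)}) k φ x y m) {α β : ℕ}
    (hαm : α ∈ missing (G.deleteEdges {s(x, y ⟨0, hp⟩)}) k φ (y m))
    (hβx : β ∈ missing (G.deleteEdges {s(x, y ⟨0, hp⟩)}) k φ x)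
    (hwit : ∀ j < m, α ∈ missing (G.deleteEdges {s(x, y ⟨0, hp⟩)}) k φ (y j) →
      ¬ (kempeGraph (G.deleteEdges {s(x, y ⟨0, hp⟩)}) φ α β).Reachable (y m) (y j)) :
    (kempeGraph (G.deleteEdges {s(x, y ⟨0, hp⟩)}) φ α β).Reachable (y m) x := by
  by_contra hx
  have hfan' := hfan.kempeSwap hx hβx (fun i => adj_deleteEdges_of_pos hp hinj (hadj i)) hwit
  refine Set.disjoint_left.mp
    (disjoint_missing_center_of_isMultiFanUpTo hG hp hinj hadj m _
      (hφ.kempeSwap hαm.1 hβx.1) hfan') ?_ (mem_missing_kempeSwap_of_reachable .rfl hβx.1 hαm)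
  rwa [missing_kempeSwap_of_not_reachable hx]

theorem disjoint_missing_of_isMultiFanUpTo [Fintype (G.neighborSet x)]
    (hG : ∀ ψ, ¬ IsProperEdgeColoring G k ψ) (hk : G.degree x ≤ k) (hp : 0 < p)
    (hinj : Injective y) (hadj : ∀ i, G.Adj x (y i)) {φ : Sym2 V → ℕ}
    (hφ : IsProperEdgeColoring (G.deleteEdges {s(x, y ⟨0, hp⟩)}) k φ) {n : Fin p}
    (hfan : IsMultiFanUpTo (G.deleteEdges {s(x, y ⟨0, hp⟩)}) k φ x y n) :
    ∀ t < n, Disjoint (missing (G.deleteEdges {s(x, y ⟨0, hp⟩)}) k φ (y t))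
      (missing (G.deleteEdges {s(x, y ⟨0, hp⟩)}) k φ (y n)) := by
  induction n using WellFoundedLT.induction with
  | _ n ih =>
  intro t htn
  refine Set.disjoint_left.mpr fun α hαt hαn => ?_
  have huniq : ∀ j < n, α ∈ missing (G.deleteEdges {s(x, y ⟨0, hp⟩)}) k φ (y j) → j = t := by
    intro j hjn hαj
    by_contra hjt
    rcases lt_or_gt_of_ne hjt with h | h
    · exact Set.disjoint_left.mp (ih t htn (hfan.mono htn.le) j h) hαj hαt
    · exact Set.disjoint_left.mp (ih j hjn (hfan.mono hjn.le) t h) hαt hαj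
  obtain ⟨β, hβx⟩ := missing_deleteEdges_nonempty (φ := φ) (hadj ⟨0, hp⟩) hk
  have hreach_t := reachable_kempeGraph_of_isMultiFanUpTo hG hp hinj hadj hφ
    (hfan.mono htn.le) hαt hβx fun j hjt hαj => absurd (huniq j (hjt.trans htn) hαj) hjt.ne
  have hsep : ¬ (kempeGraph _ φ α β).Reachable (y t) (y n) :=
    not_reachable_of_subsingleton_neighborSet hφ.encard_neighborSet_kempeGraph_le_two
      (hφ.subsingleton_neighborSet_kempeGraph (.inl hαt))
      (hφ.subsingleton_neighborSet_kempeGraph (.inr hβx))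
      (hφ.subsingleton_neighborSet_kempeGraph (.inl hαn))
      (hadj t).ne.symm (hinj.ne htn.ne).symm (hadj n).ne.symm hreach_t
  have hreach_n := reachable_kempeGraph_of_isMultiFanUpTo hG hp hinj hadj hφ hfan hαn hβx
    fun j hjn hαj h => hsep (huniq j hjn hαj ▸ h.symm)
  exact hsep (hreach_t.trans hreach_n.symm)

end CriticalFan

end

theorem multifan_elementary_general {V : Type*} [Fintype V]
    (G : SimpleGraph V) [DecidableRel G.Adj]
    (hClass2 : chromIndex G = G.maxDegree + 1)
    (x : V) (p : ℕ) (hp : 0 < p) (y : Fin p → V)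
    -- the edges `e_i = x yᵢ` are distinct edges of `G`
    (hinj : Function.Injective y)
    (hadj : ∀ i : Fin p, G.Adj x (y i))
    (φ : Sym2 V → ℕ)
    (hφ : IsProperEdgeColoring (G.deleteEdges {s(x, y ⟨0, hp⟩)}) G.maxDegree φ)
    -- the multi-fan condition F2
    (hfan : ∀ i : Fin p, 0 < (i : ℕ) → ∃ j : Fin p, j < i ∧
      φ s(x, y i) ∈ missing (G.deleteEdges {s(x, y ⟨0, hp⟩)}) G.maxDegree φ (y j)) :
    ∀ u ∈ insert x (Set.range y), ∀ v ∈ insert x (Set.range y), u ≠ v →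
      missing (G.deleteEdges {s(x, y ⟨0, hp⟩)}) G.maxDegree φ u ∩
        missing (G.deleteEdges {s(x, y ⟨0, hp⟩)}) G.maxDegree φ v = ∅ := by
  have hG := not_isProperEdgeColoring_of_lt_chromIndex (G := G) (k := G.maxDegree) (by omega)
  have hfan' : ∀ n, IsMultiFanUpTo _ _ φ x y n := fun n i _ => hfan i
  have hcenter n := disjoint_missing_center_of_isMultiFanUpTo hG hp hinj hadj n φ hφ (hfan' n)
  have hleaves {m n} (hmn : m < n) := disjoint_missing_of_isMultiFanUpTo hG
    (G.degree_le_maxDegree x) hp hinj hadj hφ (hfan' n) m hmn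
  rintro u (rfl | ⟨i, rfl⟩) v (rfl | ⟨j, rfl⟩) huv <;> rw [← Set.disjoint_iff_inter_eq_empty]
  · exact absurd rfl huv
  · exact hcenter j
  · exact (hcenter i).symm
  · rcases lt_or_gt_of_ne (ne_of_apply_ne y huv) with h | h
    exacts [hleaves h, (hleaves h).symm]

/-- If `G` is Class 2 with critical edge `e₁ = x y₀`,
`φ ∈ C^Δ(G - e₁)`, and `F = (x, e₁, y 0, …, e_p, y (p-1))` is a multi-fan at `x`
with respect to `e₁` and `φ`, then `V(F) = {x} ∪ {y i}` is `φ`-elementary. -/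
theorem multifan_elementary {V : Type*} [Fintype V] [DecidableEq V]
    (G : SimpleGraph V) [DecidableRel G.Adj]
    (hClass2 : chromIndex G = G.maxDegree + 1)
    (x : V) (p : ℕ) (hp : 0 < p) (y : Fin p → V)
    -- the edges `e_i = x yᵢ` are distinct edges of `G`
    (hinj : Function.Injective y)
    (hadj : ∀ i : Fin p, G.Adj x (y i))
    -- `e₁ = x y₀` is a critical edge
    (hcritical : chromIndex (G.deleteEdges {s(x, y ⟨0, hp⟩)}) < chromIndex G)
    (φ : Sym2 V → ℕ)
    (hφ : IsProperEdgeColoring (G.deleteEdges {s(x, y ⟨0, hp⟩)}) G.maxDegree φ)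
    -- the multi-fan condition F2
    (hfan : ∀ i : Fin p, 0 < (i : ℕ) → ∃ j : Fin p, j < i ∧
      φ s(x, y i) ∈ missing (G.deleteEdges {s(x, y ⟨0, hp⟩)}) G.maxDegree φ (y j)) :
    ∀ u ∈ insert x (Set.range y), ∀ v ∈ insert x (Set.range y), u ≠ v →
      missing (G.deleteEdges {s(x, y ⟨0, hp⟩)}) G.maxDegree φ u ∩
        missing (G.deleteEdges {s(x, y ⟨0, hp⟩)}) G.maxDegree φ v = ∅ :=
  multifan_elementary_general G hClass2 x p hp y hinj hadj φ hφ hfan
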